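/- arXiv:2209.07868 — 2 statements merged into one kernel-verified Lean document; each statement's English description precedes it below -/
import Mathlib

section
/- Let Q0, Q*, Q1 be probability measures on the real line such that Q0 ≤_lr Q* ≤_lr Q1 and Q0((x,∞)) + Q1((−∞,x)) > 0 for every x ∈ ℝ. Let Q := λ0·Q0 + λ1·Q1 with λ0, λ1 > 0 and λ0 + λ1 = 1. Then the limit g(y) := lim_{x→y−} Q*((x,y])/Q((x,y]) (with the convention 0/0 := 0) exists for every y ∈ ℝ, and g defines a bounded density of Q* with respect to Q. -/
open MeasureTheory Set Filter

noncomputable section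

/-- `g` is a (measurable, nonnegative) density of `Q` with respect to `μ`,
i.e. `Q B = ∫_B g dμ` for all Borel sets `B`. -/
def IsDensity (Q μ : Measure ℝ) (g : ℝ → ENNReal) : Prop :=
  Measurable g ∧ ∀ B : Set ℝ, MeasurableSet B → Q B = ∫⁻ x in B, g x ∂μ

/-- Likelihood ratio order `Q1 ≤_lr Q2`: there exist a σ-finite measure `μ` and densities
`g1 = dQ1/dμ`, `g2 = dQ2/dμ` such that the ratio `g2/g1` (with values in `[0,∞]`)
is nondecreasing on the set `{g1 + g2 > 0}`. -/
def LikelihoodRatioLE (Q1 Q2 : Measure ℝ) : Prop :=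
  ∃ (μ : Measure ℝ) (g1 g2 : ℝ → ENNReal), SigmaFinite μ ∧
    IsDensity Q1 μ g1 ∧ IsDensity Q2 μ g2 ∧
    ∀ x y : ℝ, x ≤ y → 0 < g1 x + g2 x → 0 < g1 y + g2 y →
      g2 x / g1 x ≤ g2 y / g1 y

/-!
Write `Q = l0 • Q0 + l1 • Q1`. For `P ≤_lr R` and an interval `I` to the left of `J` one has
`R I * P J ≤ P I * R J`. Hence the ratios `Q0 (x, y] / Qs (x, y]` and `Qs (x, y] / Q1 (x, y]` are
monotone in `x`, and since `Qs / Q = (l0 * Q0 / Qs + l1 * (Qs / Q1)⁻¹)⁻¹` on intervals, the left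
limit `g y` exists. The same inequality, applied against `(y, ∞)` and `(-∞, x]`, bounds
`Qs (x, y] / Q (x, y]` by `(l0 * Q0 (y, ∞) + l1 * Q1 (-∞, x])⁻¹`, which is uniformly bounded by the
support condition and lower semicontinuity. A `Q`-null set charged by `Qs` would contain a point
`c` with `Q0 [c, ∞) = Q1 (-∞, c] = 0`, so `Qs ≪ Q`. Finally the right limits of the ratios agree
with the left ones off a countable set (the gaps between them are disjoint intervals), so comparing
with Besicovitch's differentiation theorem over balls identifies `g` with `dQs/dQ` almost
everywhere.
-/

open scoped ENNReal Topology

namespace ENNReal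

variable {a b c d : ℝ≥0∞}

theorem div_le_div_of_mul_le_mul (h : c * b ≤ a * d) (hab : a ≠ 0 ∨ b ≠ 0) (hb : b ≠ ∞) :
    c / d ≤ a / b := by
  rcases eq_or_ne b 0 with rfl | hb0
  · simp [div_zero (hab.resolve_right (not_not.2 rfl))]
  rcases eq_or_ne d 0 with rfl | hd0
  · have : c = 0 := by simpa [hb0] using h
    simp [this]
  rcases eq_or_ne d ∞ with rfl | hdt
  · simp
  rw [ENNReal.div_le_iff_le_mul (Or.inl hd0) (Or.inl hdt), mul_comm, ← mul_div_assoc,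
    ENNReal.le_div_iff_mul_le (Or.inl hb0) (Or.inl hb), mul_comm d]
  exact h

theorem le_div_mul (hb : b ≠ ∞) (hab : a / b ≠ ∞) : a ≤ a / b * b := by
  rcases eq_or_ne b 0 with rfl | hb0
  · simp [not_not.1 (mt ENNReal.div_zero hab)]
  · rw [ENNReal.div_mul_cancel hb0 hb]

theorem min_div_le_add_div_add (hb : b ≠ ∞) (hd : d ≠ ∞) :
    min (a / b) (c / d) ≤ (a + c) / (b + d) := by
  rcases eq_or_ne (b + d) 0 with hbd | hbd
  · obtain ⟨rfl, rfl⟩ := add_eq_zero.1 hbd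
    exact (min_le_left _ _).trans (by simpa using ENNReal.div_le_div_right le_self_add 0)
  rw [ENNReal.le_div_iff_mul_le (Or.inl hbd) (Or.inl (add_ne_top.2 ⟨hb, hd⟩)), mul_add]
  gcongr
  · exact (mul_le_mul_left (min_le_left _ _) b).trans (by rw [mul_comm]; exact mul_div_le)
  · exact (mul_le_mul_left (min_le_right _ _) d).trans (by rw [mul_comm]; exact mul_div_le)

theorem add_div_add_le_max_div (hb : b ≠ ∞) (hd : d ≠ ∞) :
    (a + c) / (b + d) ≤ max (a / b) (c / d) := by
  rcases eq_or_ne (max (a / b) (c / d)) ∞ with hM | hM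
  · simp [hM]
  obtain ⟨hab, hcd⟩ : a / b ≠ ∞ ∧ c / d ≠ ∞ := by simpa [max_eq_top, not_or] using hM
  refine ENNReal.div_le_of_le_mul ?_
  rw [mul_add]
  gcongr
  · exact (le_div_mul hb hab).trans (by gcongr; exact le_max_left _ _)
  · exact (le_div_mul hd hcd).trans (by gcongr; exact le_max_right _ _)

theorem div_le_add_div_add (h : b * c ≤ a * d) (hb : b ≠ ∞) (hd : d ≠ ∞) :
    c / d ≤ (a + c) / (b + d) := by
  by_cases hab : a = 0 ∧ b = 0
  · simp [hab.1, hab.2]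
  exact (le_min (div_le_div_of_mul_le_mul (by rwa [mul_comm]) (not_and_or.1 hab) hb) le_rfl).trans
    (min_div_le_add_div_add hb hd)

theorem add_div_add_le_div (h : b * c ≤ a * d) (hab : a ≠ 0 ∨ b ≠ 0) (hb : b ≠ ∞)
    (hd : d ≠ ∞) : (a + c) / (b + d) ≤ a / b :=
  (add_div_add_le_max_div hb hd).trans
    (max_le le_rfl (div_le_div_of_mul_le_mul (by rwa [mul_comm]) hab hb))

end ENNReal

namespace IsDensity

variable {P μ : Measure ℝ} {f : ℝ → ℝ≥0∞}

theorem absolutelyContinuous (h : IsDensity P μ f) : P ≪ μ :=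
  Measure.AbsolutelyContinuous.mk fun s hs hs0 => by
    rw [h.2 s hs, Measure.restrict_eq_zero.2 hs0, lintegral_zero_measure]

theorem ae_lt_top [IsFiniteMeasure P] (h : IsDensity P μ f) : ∀ᵐ x ∂μ, f x < ∞ :=
  MeasureTheory.ae_lt_top h.1 <| by
    rw [← setLIntegral_univ, ← h.2 univ .univ]
    exact measure_ne_top P univ

theorem ae_ne_zero (h : IsDensity P μ f) : ∀ᵐ x ∂P, f x ≠ 0 := by
  have hs : MeasurableSet (f ⁻¹' {0}) := h.1 (measurableSet_singleton 0)
  rw [ae_iff]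
  simp only [not_not]
  change P (f ⁻¹' {0}) = 0
  rw [h.2 _ hs]
  exact (setLIntegral_eq_zero_iff hs h.1).2 (Eventually.of_forall fun _ hx => hx)

theorem congr_ae {g : ℝ → ℝ≥0∞} (h : IsDensity P μ f) (hg : Measurable g) (hfg : f =ᵐ[μ] g) :
    IsDensity P μ g :=
  ⟨hg, fun B hB => (h.2 B hB).trans (setLIntegral_congr_fun_ae hB (hfg.mono fun _ hx _ => hx))⟩

end IsDensity

theorem mul_le_mul_of_monotone_div {f g : ℝ → ℝ≥0∞}
    (hmono : ∀ x y : ℝ, x ≤ y → 0 < f x + g x → 0 < f y + g y → g x / f x ≤ g y / f y)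
    {p q : ℝ} (hpq : p ≤ q) (hfp : f p ≠ ∞) (hgq : g q ≠ ∞) :
    g p * f q ≤ f p * g q := by
  rcases eq_or_ne (f p + g p) 0 with hp | hp
  · simp [(add_eq_zero.1 hp).2]
  rcases eq_or_ne (f q + g q) 0 with hq | hq
  · simp [(add_eq_zero.1 hq).1]
  rcases eq_or_ne (f q) 0 with hfq0 | hfq0
  · simp [hfq0]
  have hr := hmono p q hpq (pos_iff_ne_zero.2 hp) (pos_iff_ne_zero.2 hq)
  have hrt : g p / f p ≠ ∞ := ne_top_of_le_ne_top (ENNReal.div_ne_top hgq hfq0) hr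
  calc g p * f q ≤ g p / f p * f p * f q := by gcongr; exact ENNReal.le_div_mul hfp hrt
    _ ≤ g q / f q * f p * f q := by gcongr
    _ = f p * (f q * (g q / f q)) := by ring
    _ ≤ f p * g q := by gcongr; exact ENNReal.mul_div_le

namespace LikelihoodRatioLE

variable {P Q : Measure ℝ} [IsFiniteMeasure P] [IsFiniteMeasure Q]

/-- Setting both densities to `0` where either is infinite makes the cross-multiplied
monotonicity of the ratio hold at every pair of points. -/
theorem exists_isDensity_mul_le (h : LikelihoodRatioLE P Q) :
    ∃ (μ : Measure ℝ) (f g : ℝ → ℝ≥0∞), IsDensity P μ f ∧ IsDensity Q μ g ∧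
      ∀ p q, p ≤ q → g p * f q ≤ f p * g q := by
  obtain ⟨μ, f, g, -, hf, hg, hmono⟩ := h
  set G := {x | f x ≠ ∞ ∧ g x ≠ ∞}
  have hG : MeasurableSet G :=
    (hf.1 (measurableSet_singleton ∞)).compl.inter (hg.1 (measurableSet_singleton ∞)).compl
  have hGae : ∀ᵐ x ∂μ, x ∈ G := by
    filter_upwards [hf.ae_lt_top, hg.ae_lt_top] with x hfx hgx using ⟨hfx.ne, hgx.ne⟩
  refine ⟨μ, G.indicator f, G.indicator g,
    hf.congr_ae (hf.1.indicator hG) (hGae.mono fun x hx => (indicator_of_mem hx f).symm),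
    hg.congr_ae (hg.1.indicator hG) (hGae.mono fun x hx => (indicator_of_mem hx g).symm),
    fun p q hpq => ?_⟩
  by_cases hp : p ∈ G
  · by_cases hq : q ∈ G
    · simp only [indicator_of_mem hp, indicator_of_mem hq]
      exact mul_le_mul_of_monotone_div hmono hpq hp.1 hq.2
    · simp [indicator_of_notMem hq]
  · simp [indicator_of_notMem hp]

theorem mul_le_mul (h : LikelihoodRatioLE P Q) {I J : Set ℝ} (hI : MeasurableSet I)
    (hJ : MeasurableSet J) (hIJ : ∀ p ∈ I, ∀ q ∈ J, p ≤ q) : Q I * P J ≤ P I * Q J := by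
  obtain ⟨μ, f, g, hf, hg, hfg⟩ := h.exists_isDensity_mul_le
  calc Q I * P J = ∫⁻ p in I, ∫⁻ q in J, g p * f q ∂μ ∂μ := by
        simp_rw [lintegral_const_mul _ hf.1, lintegral_mul_const _ hg.1, ← hf.2 J hJ, ← hg.2 I hI]
    _ ≤ ∫⁻ p in I, ∫⁻ q in J, f p * g q ∂μ ∂μ :=
        setLIntegral_mono' hI fun p hp => setLIntegral_mono' hJ fun q hq => hfg p q (hIJ p hp q hq)
    _ = P I * Q J := by
        simp_rw [lintegral_const_mul _ hg.1, lintegral_mul_const _ hf.1, ← hg.2 J hJ, ← hf.2 I hI]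

theorem ae_measure_Ici_eq_zero (h : LikelihoodRatioLE P Q) {N : Set ℝ} (hN : MeasurableSet N)
    (hPN : P N = 0) : ∀ᵐ x ∂Q, x ∈ N → P (Ici x) = 0 := by
  obtain ⟨μ, f, g, hf, hg, hfg⟩ := h.exists_isDensity_mul_le
  have hfN : ∀ᵐ x ∂Q, x ∈ N → f x = 0 :=
    hg.absolutelyContinuous.ae_le ((setLIntegral_eq_zero_iff hN hf.1).1 (hf.2 N hN ▸ hPN))
  filter_upwards [hfN, hg.ae_ne_zero] with x hfx hgx hx
  rw [hf.2 _ measurableSet_Ici, setLIntegral_eq_zero_iff measurableSet_Ici hf.1]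
  refine Eventually.of_forall fun q hq => ?_
  have := hfg x q hq
  rw [hfx hx, zero_mul, nonpos_iff_eq_zero] at this
  exact (mul_eq_zero.1 this).resolve_left hgx

theorem ae_measure_Iic_eq_zero (h : LikelihoodRatioLE P Q) {N : Set ℝ} (hN : MeasurableSet N)
    (hQN : Q N = 0) : ∀ᵐ x ∂P, x ∈ N → Q (Iic x) = 0 := by
  obtain ⟨μ, f, g, hf, hg, hfg⟩ := h.exists_isDensity_mul_le
  have hgN : ∀ᵐ x ∂P, x ∈ N → g x = 0 :=
    hf.absolutelyContinuous.ae_le ((setLIntegral_eq_zero_iff hN hg.1).1 (hg.2 N hN ▸ hQN))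
  filter_upwards [hgN, hf.ae_ne_zero] with x hgx hfx hx
  rw [hg.2 _ measurableSet_Iic, setLIntegral_eq_zero_iff measurableSet_Iic hg.1]
  refine Eventually.of_forall fun p hp => ?_
  have := hfg p x hp
  rw [hgx hx, mul_zero, nonpos_iff_eq_zero] at this
  exact (mul_eq_zero.1 this).resolve_right hfx

end LikelihoodRatioLE

theorem tendsto_sub_nhdsGT_zero (y : ℝ) : Tendsto (fun r => y - r) (𝓝[>] 0) (𝓝[<] y) :=
  tendsto_nhdsWithin_iff.2 ⟨((continuous_sub_left y).tendsto' 0 y (sub_zero y)).mono_left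
    nhdsWithin_le_nhds, eventually_nhdsWithin_of_forall fun _ hr => sub_lt_self y hr⟩

theorem tendsto_sub_nhdsLT (y : ℝ) : Tendsto (fun x => y - x) (𝓝[<] y) (𝓝[>] 0) :=
  tendsto_nhdsWithin_iff.2 ⟨((continuous_sub_left y).tendsto' y 0 (sub_self y)).mono_left
    nhdsWithin_le_nhds, eventually_nhdsWithin_of_forall fun _ hx => mem_Ioi.2 (sub_pos.2 hx)⟩

theorem tendsto_add_nhdsGT_zero (y : ℝ) : Tendsto (fun r => y + r) (𝓝[>] 0) (𝓝[>] y) :=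
  tendsto_nhdsWithin_iff.2 ⟨((continuous_const_add y).tendsto' 0 y (add_zero y)).mono_left
    nhdsWithin_le_nhds, eventually_nhdsWithin_of_forall fun _ hr => lt_add_of_pos_right y hr⟩

theorem measure_Ioc_add_Ioc (ν : Measure ℝ) {a b c : ℝ} (hab : a ≤ b) (hbc : b ≤ c) :
    ν (Ioc a c) = ν (Ioc a b) + ν (Ioc b c) := by
  rw [← Ioc_union_Ioc_eq_Ioc hab hbc,
    measure_union (Ioc_disjoint_Ioc_of_le le_rfl) measurableSet_Ioc]

theorem countable_setOf_measure_singleton_ne_zero (ν : Measure ℝ) [IsFiniteMeasure ν] :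
    {x | ν {x} ≠ 0}.Countable := by
  simpa only [pos_iff_ne_zero] using Measure.countable_meas_pos_of_disjoint_iUnion (μ := ν)
    (As := fun x : ℝ => ({x} : Set ℝ)) (fun _ => measurableSet_singleton _)
    fun _ _ hxy => disjoint_singleton.2 hxy

section MeasureContinuity

variable (ν : Measure ℝ) [IsFiniteMeasure ν] (y : ℝ)

theorem tendsto_measure_Ioc_nhdsLT : Tendsto (fun x => ν (Ioc x y)) (𝓝[<] y) (𝓝 (ν {y})) := by
  have h := tendsto_measure_biInter_gt (μ := ν) (s := fun r => Ioc (y - r) y) (a := 0)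
    (fun _ _ => measurableSet_Ioc.nullMeasurableSet)
    (fun _ _ _ hij => Ioc_subset_Ioc_left (by linarith)) ⟨1, one_pos, measure_ne_top _ _⟩
  have hinter : ⋂ r > (0 : ℝ), Ioc (y - r) y = {y} := by
    ext x
    simp only [mem_iInter, mem_Ioc, mem_singleton_iff]
    refine ⟨fun hx => le_antisymm (hx 1 one_pos).2 (le_of_forall_pos_lt_add fun r hr => ?_),
      fun hx r hr => ⟨by linarith, hx.le⟩⟩
    linarith [(hx r hr).1]
  rw [hinter] at h
  refine (h.comp (tendsto_sub_nhdsLT y)).congr fun x => ?_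
  simp

theorem tendsto_measure_Iic_nhdsLT : Tendsto (fun x => ν (Iic x)) (𝓝[<] y) (𝓝 (ν (Iio y))) := by
  have h := ENNReal.Tendsto.sub tendsto_const_nhds (tendsto_measure_Ioc_nhdsLT ν y)
    (Or.inl (measure_ne_top ν (Iic y)))
  rw [← ENNReal.eq_sub_of_add_eq (measure_ne_top ν {y}) (by
    rw [← measure_union (disjoint_singleton_right.2 self_notMem_Iio) (measurableSet_singleton y),
      Iio_union_right])] at h
  refine h.congr' (eventually_nhdsWithin_of_forall fun x hx => ?_)
  refine (ENNReal.eq_sub_of_add_eq (measure_ne_top ν _) ?_).symm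
  rw [← measure_union (Iic_disjoint_Ioc le_rfl) measurableSet_Ioc,
    Iic_union_Ioc_eq_Iic (le_of_lt hx)]

theorem tendsto_measure_closedBall_nhdsGT :
    Tendsto (fun r => ν (Metric.closedBall y r)) (𝓝[>] 0) (𝓝 (ν {y})) := by
  have h := tendsto_measure_biInter_gt (μ := ν) (s := fun r => Metric.closedBall y r) (a := 0)
    (fun _ _ => measurableSet_closedBall.nullMeasurableSet)
    (fun _ _ _ hij => Metric.closedBall_subset_closedBall hij) ⟨1, one_pos, measure_ne_top _ _⟩
  rwa [Metric.biInter_gt_closedBall, Metric.closedBall_zero] at h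

theorem lowerSemicontinuous_measure_Iio : LowerSemicontinuous fun y => ν (Iio y) := by
  intro y c hc
  obtain ⟨x, hxc, hxy⟩ :=
    (((tendsto_measure_Iic_nhdsLT ν y).eventually (lt_mem_nhds hc)).and self_mem_nhdsWithin).exists
  filter_upwards [Ioi_mem_nhds hxy] with y' hy'
  exact hxc.trans_le (measure_mono (Iic_subset_Iio.2 hy'))

theorem lowerSemicontinuous_measure_Ioi : LowerSemicontinuous fun y => ν (Ioi y) := by
  convert (lowerSemicontinuous_measure_Iio (ν.map Neg.neg)).comp continuous_neg using 2 with y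
  rw [Function.comp_apply, Measure.map_apply measurable_neg measurableSet_Iio]
  simp

end MeasureContinuity

def leftNullPoints (ν : Measure ℝ) : Set ℝ := {y | ∃ x < y, ν (Ioc x y) = 0}

def rightNullPoints (ν : Measure ℝ) : Set ℝ := {y | ∃ z > y, ν (Ioc y z) = 0}

section NullPoints

variable {ν ρ : Measure ℝ} {y : ℝ}

theorem notMem_leftNullPoints : y ∉ leftNullPoints ν ↔ ∀ x < y, ν (Ioc x y) ≠ 0 := by
  simp [leftNullPoints]

theorem notMem_rightNullPoints : y ∉ rightNullPoints ν ↔ ∀ z > y, ν (Ioc y z) ≠ 0 := by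
  simp [rightNullPoints]

theorem leftNullPoints_anti (h : ν ≤ ρ) : leftNullPoints ρ ⊆ leftNullPoints ν :=
  fun _ ⟨x, hx, h0⟩ => ⟨x, hx, nonpos_iff_eq_zero.1 (h0 ▸ h _)⟩

theorem rightNullPoints_anti (h : ν ≤ ρ) : rightNullPoints ρ ⊆ rightNullPoints ν :=
  fun _ ⟨z, hz, h0⟩ => ⟨z, hz, nonpos_iff_eq_zero.1 (h0 ▸ h _)⟩

theorem eventually_measure_Ioc_eq_zero (hy : y ∈ leftNullPoints ν) :
    ∀ᶠ x in 𝓝[<] y, ν (Ioc x y) = 0 := by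
  obtain ⟨x₀, hx₀, h0⟩ := hy
  filter_upwards [Ioo_mem_nhdsLT hx₀] with x hx
  exact measure_mono_null (Ioc_subset_Ioc_left hx.1.le) h0

end NullPoints

/-- The open intervals `(x, y)` witnessing `y ∈ leftNullPoints ν` cover it up to a countable set
of points `y` that are not atoms; their union is null by second countability. -/
theorem measure_leftNullPoints (ν : Measure ℝ) : ν (leftNullPoints ν) = 0 := by
  set S := leftNullPoints ν
  choose! x hx using fun y (hy : y ∈ S) => hy
  set V := ⋃ y ∈ S, Ioo (x y) y with hV_def
  have hV : ν V = 0 := by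
    obtain ⟨T, hTS, hT, hTV⟩ :=
      TopologicalSpace.isOpen_biUnion_countable S (fun y => Ioo (x y) y) fun _ _ => isOpen_Ioo
    rw [hV_def, ← hTV]
    exact (measure_biUnion_null_iff hT).2 fun y hy =>
      measure_mono_null Ioo_subset_Ioc_self (hx y (hTS hy)).2
  have hSV : (S \ V).Countable := by
    refine Set.PairwiseDisjoint.countable_of_isOpen (s := fun y => Ioo (x y) y) ?_
      (fun _ _ => isOpen_Ioo) fun y hy => nonempty_Ioo.2 (hx y hy.1).1
    intro y hy y' hy' hne
    wlog hlt : y < y' generalizing y y'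
    · exact (this hy' hy hne.symm (hne.lt_or_gt.resolve_left hlt)).symm
    have : y ≤ x y' := by
      by_contra! h
      exact hy.2 (mem_biUnion (t := fun y => Ioo (x y) y) hy'.1 ⟨h, hlt⟩)
    exact disjoint_left.2 fun t ht ht' => (ht.2.trans_le this).not_gt ht'.1
  have hSV0 : ν (S \ V) = 0 := (measure_null_iff_singleton hSV).2 fun y hy =>
    measure_mono_null (singleton_subset_iff.2 (right_mem_Ioc.2 (hx y hy.1).1)) (hx y hy.1).2
  exact measure_mono_null (subset_union_right.trans union_sdiff_self.symm.subset)
    (measure_union_null hV hSV0)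

theorem countable_rightNullPoints_diff (ν : Measure ℝ) :
    (rightNullPoints ν \ leftNullPoints ν).Countable := by
  choose! z hz using fun y (hy : y ∈ rightNullPoints ν) => hy
  refine Set.PairwiseDisjoint.countable_of_Ioo (y := z) ?_ fun y hy => (hz y hy.1).1
  intro y hy y' hy' hne
  wlog hlt : y < y' generalizing y y'
  · exact (this hy' hy hne.symm (hne.lt_or_gt.resolve_left hlt)).symm
  have : z y ≤ y' := by
    by_contra! h
    exact hy'.2 ⟨y, hlt, measure_mono_null (Ioc_subset_Ioc_right h.le) (hz y hy.1).2⟩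
  exact disjoint_left.2 fun t ht ht' => (ht.2.trans_le this).not_gt ht'.1

/-- The limit of `P (x, y] / Q (x, y]` as `x → y⁻` when `P ≤_lr Q` (see
`LikelihoodRatioLE.tendsto_leftRatio`). -/
def leftRatio (P Q : Measure ℝ) (y : ℝ) : ℝ≥0∞ :=
  sInf ((fun x => P (Ioc x y) / Q (Ioc x y)) '' Iio y)

/-- The limit of `P (y, z] / Q (y, z]` as `z → y⁺` when `P ≤_lr Q` (see
`LikelihoodRatioLE.tendsto_rightRatio`). -/
def rightRatio (P Q : Measure ℝ) (y : ℝ) : ℝ≥0∞ :=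
  sSup ((fun z => P (Ioc y z) / Q (Ioc y z)) '' Ioi y)

theorem measure_add_ne_zero {P Q : Measure ℝ} {s : Set ℝ} (h : (P + Q) s ≠ 0) :
    P s ≠ 0 ∨ Q s ≠ 0 := by
  rw [Measure.add_apply] at h
  exact not_and_or.1 (mt add_eq_zero.2 h)

namespace LikelihoodRatioLE

variable {P Q : Measure ℝ} [IsFiniteMeasure P] [IsFiniteMeasure Q] {y : ℝ}

theorem div_le_div (h : LikelihoodRatioLE P Q) {I J : Set ℝ} (hI : MeasurableSet I)
    (hJ : MeasurableSet J) (hIJ : ∀ p ∈ I, ∀ q ∈ J, p ≤ q) (hI0 : P I ≠ 0 ∨ Q I ≠ 0) :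
    P J / Q J ≤ P I / Q I :=
  ENNReal.div_le_div_of_mul_le_mul (by rw [mul_comm]; exact h.mul_le_mul hI hJ hIJ) hI0
    (measure_ne_top Q I)

theorem antitoneOn_div_Ioc_left (h : LikelihoodRatioLE P Q) (y : ℝ) :
    AntitoneOn (fun x => P (Ioc x y) / Q (Ioc x y)) (Iio y) := by
  intro x _ x' hx' hxx'
  simp only [measure_Ioc_add_Ioc _ hxx' (le_of_lt hx')]
  exact ENNReal.div_le_add_div_add
    (h.mul_le_mul measurableSet_Ioc measurableSet_Ioc fun p hp q hq => hp.2.trans hq.1.le)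
    (measure_ne_top _ _) (measure_ne_top _ _)

theorem antitoneOn_div_Ioc_right (h : LikelihoodRatioLE P Q) (hy : y ∉ rightNullPoints (P + Q)) :
    AntitoneOn (fun z => P (Ioc y z) / Q (Ioc y z)) (Ioi y) := by
  intro z hz z' _ hzz'
  simp only [measure_Ioc_add_Ioc _ (le_of_lt hz) hzz']
  exact ENNReal.add_div_add_le_div
    (h.mul_le_mul measurableSet_Ioc measurableSet_Ioc fun p hp q hq => hp.2.trans hq.1.le)
    (measure_add_ne_zero (notMem_rightNullPoints.1 hy z hz)) (measure_ne_top _ _)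
    (measure_ne_top _ _)

theorem tendsto_leftRatio (h : LikelihoodRatioLE P Q) (y : ℝ) :
    Tendsto (fun x => P (Ioc x y) / Q (Ioc x y)) (𝓝[<] y) (𝓝 (leftRatio P Q y)) :=
  (h.antitoneOn_div_Ioc_left y).tendsto_nhdsLT (OrderBot.bddBelow _)

theorem tendsto_rightRatio (h : LikelihoodRatioLE P Q) (hy : y ∉ rightNullPoints (P + Q)) :
    Tendsto (fun z => P (Ioc y z) / Q (Ioc y z)) (𝓝[>] y) (𝓝 (rightRatio P Q y)) :=
  (h.antitoneOn_div_Ioc_right hy).tendsto_nhdsGT (OrderTop.bddAbove _)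

theorem rightRatio_le_leftRatio (h : LikelihoodRatioLE P Q) (hy : y ∉ leftNullPoints (P + Q)) :
    rightRatio P Q y ≤ leftRatio P Q y :=
  sSup_le <| forall_mem_image.2 fun _ _ => le_sInf <| forall_mem_image.2 fun x hx =>
    h.div_le_div measurableSet_Ioc measurableSet_Ioc (fun _ hp _ hq => hp.2.trans hq.1.le)
      (measure_add_ne_zero (notMem_leftNullPoints.1 hy x hx))

theorem leftRatio_le_rightRatio_of_lt (h : LikelihoodRatioLE P Q)
    (hy : y ∉ rightNullPoints (P + Q)) {y' : ℝ} (hyy' : y < y') :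
    leftRatio P Q y' ≤ rightRatio P Q y := by
  obtain ⟨z, hyz, hzy'⟩ := exists_between hyy'
  exact sInf_le_of_le ⟨z, hzy', rfl⟩ <| le_sSup_of_le ⟨z, hyz, rfl⟩ <|
    h.div_le_div measurableSet_Ioc measurableSet_Ioc (fun _ hp _ hq => hp.2.trans hq.1.le)
      (measure_add_ne_zero (notMem_rightNullPoints.1 hy z hyz))

/-- The gaps `(rightRatio y, leftRatio y)` are disjoint open intervals, hence countably many. -/
theorem countable_rightRatio_lt_leftRatio (h : LikelihoodRatioLE P Q) :
    {y | y ∉ rightNullPoints (P + Q) ∧ rightRatio P Q y < leftRatio P Q y}.Countable := by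
  refine Set.PairwiseDisjoint.countable_of_isOpen
    (s := fun y => Ioo (rightRatio P Q y) (leftRatio P Q y)) ?_ (fun _ _ => isOpen_Ioo)
    fun y hy => nonempty_Ioo.2 hy.2
  intro y hy y' hy' hne
  wlog hlt : y < y' generalizing y y'
  · exact (this hy' hy hne.symm (hne.lt_or_gt.resolve_left hlt)).symm
  exact disjoint_left.2 fun t ht ht' =>
    (ht'.2.trans_le (h.leftRatio_le_rightRatio_of_lt hy.1 hlt)).not_gt ht.1

end LikelihoodRatioLE

/-- Both terms are lower semicontinuous, and each is bounded below near one end of the line, so a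
positive minimum on a compact interval gives a uniform lower bound. -/
theorem exists_pos_le_measure_Ioi_add_measure_Iio {P Q : Measure ℝ} [IsFiniteMeasure P]
    [IsFiniteMeasure Q] (hP : P ≠ 0) (hQ : Q ≠ 0) (h : ∀ y, 0 < P (Ioi y) + Q (Iio y)) :
    ∃ ε > 0, ∀ y, ε ≤ P (Ioi y) + Q (Iio y) := by
  obtain ⟨b, hb⟩ : ∃ b, 0 < P (Ioi b) := by
    obtain ⟨x, hx⟩ := ((tendsto_measure_Ici_atBot P).eventually
      (lt_mem_nhds (Measure.measure_univ_pos.2 hP))).exists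
    exact ⟨x - 1, hx.trans_le (measure_mono (Ici_subset_Ioi.2 (sub_one_lt x)))⟩
  obtain ⟨a, hba, ha⟩ : ∃ a, b ≤ a ∧ 0 < Q (Iio a) := by
    obtain ⟨x, hbx, hx⟩ := (((eventually_ge_atTop b).and ((tendsto_measure_Iic_atTop Q).eventually
      (lt_mem_nhds (Measure.measure_univ_pos.2 hQ)))).exists)
    exact ⟨x + 1, hbx.trans (lt_add_one x).le,
      hx.trans_le (measure_mono (Iic_subset_Iio.2 (lt_add_one x)))⟩
  obtain ⟨c, -, hc⟩ := ((lowerSemicontinuous_measure_Ioi P).add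
    (lowerSemicontinuous_measure_Iio Q)).lowerSemicontinuousOn (Icc b a) |>.exists_isMinOn
    (nonempty_Icc.2 hba) isCompact_Icc
  refine ⟨min (min (P (Ioi b)) (Q (Iio a))) (P (Ioi c) + Q (Iio c)),
    lt_min (lt_min hb ha) (h c), fun y => ?_⟩
  rcases le_or_gt y b with hyb | hby
  · exact (min_le_left _ _).trans <| (min_le_left _ _).trans <|
      (measure_mono (Ioi_subset_Ioi hyb)).trans le_self_add
  rcases le_or_gt a y with hay | hya
  · exact (min_le_left _ _).trans <| (min_le_right _ _).trans <|
      (measure_mono (Iio_subset_Iio hay)).trans le_add_self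
  · exact (min_le_right _ _).trans (hc ⟨hby.le, hya.le⟩)

theorem ae_notMem_of_countable {α : Type*} [MeasurableSpace α] (ρ : Measure α) {C : Set α}
    (hC : C.Countable) : ∀ᵐ y ∂ρ, ρ {y} = 0 → y ∉ C := by
  rw [ae_iff]
  simp only [Classical.not_imp, not_not]
  exact (measure_null_iff_singleton (hC.mono fun _ h => h.2)).2 fun _ h => h.1

theorem ae_rnDeriv_eq_zero_of_measure_eq_zero {α : Type*} [MeasurableSpace α] {ν ρ : Measure α}
    {s : Set α} (hs : ν s = 0) : ∀ᵐ y ∂ρ, y ∈ s → ν.rnDeriv ρ y = 0 := by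
  have h : ∫⁻ y in toMeasurable ν s, ν.rnDeriv ρ y ∂ρ = 0 := nonpos_iff_eq_zero.1 <|
    (Measure.setLIntegral_rnDeriv_le _).trans (by rw [measure_toMeasurable, hs])
  filter_upwards [(setLIntegral_eq_zero_iff (measurableSet_toMeasurable _ _)
    (Measure.measurable_rnDeriv ν ρ)).1 h] with y hy hys using hy (subset_toMeasurable _ _ hys)

theorem measurable_measure_Ioc_sub (ν : Measure ℝ) [SFinite ν] (r : ℝ) :
    Measurable fun y => ν (Ioc (y - r) y) :=
  measurable_measure_prodMk_left (s := {p : ℝ × ℝ | p.1 - r < p.2} ∩ {p | p.2 ≤ p.1})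
    ((measurableSet_lt (by fun_prop) measurable_snd).inter (measurableSet_le measurable_snd
      measurable_fst))

section Differentiation

variable {ν ρ : Measure ℝ} [IsFiniteMeasure ν] [IsFiniteMeasure ρ] {y : ℝ} {D L : ℝ≥0∞}
  {g : ℝ → ℝ≥0∞}

theorem eq_of_tendsto_closedBall_of_measure_singleton_ne_zero (hy : ρ {y} ≠ 0)
    (hball : Tendsto (fun r => ν (Metric.closedBall y r) / ρ (Metric.closedBall y r)) (𝓝[>] 0)
      (𝓝 D))
    (hleft : Tendsto (fun x => ν (Ioc x y) / ρ (Ioc x y)) (𝓝[<] y) (𝓝 L)) : D = L :=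
  (tendsto_nhds_unique hball (ENNReal.Tendsto.div (tendsto_measure_closedBall_nhdsGT ν y)
    (Or.inr hy) (tendsto_measure_closedBall_nhdsGT ρ y) (Or.inl (measure_ne_top ρ _)))).trans
  (tendsto_nhds_unique (ENNReal.Tendsto.div (tendsto_measure_Ioc_nhdsLT ν y) (Or.inr hy)
    (tendsto_measure_Ioc_nhdsLT ρ y) (Or.inl (measure_ne_top ρ _))) hleft)

/-- Along radii `r` for which `y - r` is an atom of neither measure, the ball `[y - r, y + r]`
splits into `(y - r, y]` and `(y, y + r]`, so its ratio lies between the two one-sided ratios. -/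
theorem eq_of_tendsto_closedBall_of_tendsto_Ioc
    (hball : Tendsto (fun r => ν (Metric.closedBall y r) / ρ (Metric.closedBall y r)) (𝓝[>] 0)
      (𝓝 D))
    (hleft : Tendsto (fun x => ν (Ioc x y) / ρ (Ioc x y)) (𝓝[<] y) (𝓝 L))
    (hright : Tendsto (fun z => ν (Ioc y z) / ρ (Ioc y z)) (𝓝[>] y) (𝓝 L)) : D = L := by
  set S := (fun r => y - r) ⁻¹' ({x | ν {x} ≠ 0} ∪ {x | ρ {x} ≠ 0})
  have hS : S.Countable := ((countable_setOf_measure_singleton_ne_zero ν).union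
    (countable_setOf_measure_singleton_ne_zero ρ)).preimage sub_right_injective
  have hl : 𝓝[Ioi 0 \ S] (0 : ℝ) ≤ 𝓝[>] 0 := nhdsWithin_mono _ sdiff_subset
  have : (𝓝[Ioi 0 \ S] (0 : ℝ)).NeBot := by
    refine mem_closure_iff_nhdsWithin_neBot.1 ?_
    rw [sdiff_eq]
    exact closure_minimal ((hS.dense_compl ℝ).open_subset_closure_inter isOpen_Ioi)
      isClosed_closure (by rw [closure_Ioi]; exact self_mem_Ici)
  have hL := (hleft.comp (tendsto_sub_nhdsGT_zero y)).mono_left hl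
  have hR := (hright.comp (tendsto_add_nhdsGT_zero y)).mono_left hl
  have hsplit : ∀ᶠ r in 𝓝[Ioi 0 \ S] (0 : ℝ), ∀ μ ∈ ({ν, ρ} : Set (Measure ℝ)),
      μ (Metric.closedBall y r) = μ (Ioc (y - r) y) + μ (Ioc y (y + r)) := by
    filter_upwards [self_mem_nhdsWithin] with r ⟨hr, hrS⟩ μ hμ
    have hμr : μ {y - r} = 0 := by
      rcases hμ with rfl | rfl <;> simp_all [S]
    rw [Real.closedBall_eq_Icc, ← measure_congr (Ioc_ae_eq_Icc' hμr),
      measure_Ioc_add_Ioc _ (sub_le_self y (le_of_lt hr)) (le_add_of_nonneg_right (le_of_lt hr))]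
  refine tendsto_nhds_unique (hball.mono_left hl) ?_
  refine tendsto_of_tendsto_of_tendsto_of_le_of_le' (by simpa using hL.min hR)
    (by simpa using hL.max hR) ?_ ?_
  all_goals filter_upwards [hsplit] with r hr
  all_goals rw [hr ν (by simp), hr ρ (by simp)]
  · exact ENNReal.min_div_le_add_div_add (measure_ne_top _ _) (measure_ne_top _ _)
  · exact ENNReal.add_div_add_le_max_div (measure_ne_top _ _) (measure_ne_top _ _)

/-- Besicovitch's ball ratios tend to `g y`: at atoms of `ρ` by the left limits alone, elsewhere
by squeezing between the one-sided limits; on the `ν`-null set `leftNullPoints ν` both `g` and the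
derivative vanish a.e. -/
theorem ae_eq_rnDeriv_of_tendsto_div_Ioc
    (hleft : ∀ y, Tendsto (fun x => ν (Ioc x y) / ρ (Ioc x y)) (𝓝[<] y) (𝓝 (g y)))
    (hright : {y | y ∉ leftNullPoints ν ∧
      ¬Tendsto (fun z => ν (Ioc y z) / ρ (Ioc y z)) (𝓝[>] y) (𝓝 (g y))}.Countable) :
    g =ᵐ[ρ] ν.rnDeriv ρ := by
  filter_upwards [Besicovitch.ae_tendsto_rnDeriv ν ρ,
    ae_rnDeriv_eq_zero_of_measure_eq_zero (measure_leftNullPoints ν),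
    ae_notMem_of_countable ρ hright] with y hball hnull hC
  by_cases hy : ρ {y} = 0
  · by_cases hyT : y ∈ leftNullPoints ν
    · rw [hnull hyT]
      refine tendsto_nhds_unique (hleft y) (tendsto_const_nhds.congr' ?_)
      filter_upwards [eventually_measure_Ioc_eq_zero hyT] with x hx
      simp [hx]
    · have := hC hy
      simp only [hyT, not_false_eq_true, true_and, not_not] at this
      exact (eq_of_tendsto_closedBall_of_tendsto_Ioc hball (hleft y) this).symm
  · exact (eq_of_tendsto_closedBall_of_measure_singleton_ne_zero hy hball (hleft y)).symm

theorem measurable_of_tendsto_div_Ioc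
    (hg : ∀ y, Tendsto (fun x => ν (Ioc x y) / ρ (Ioc x y)) (𝓝[<] y) (𝓝 (g y))) : Measurable g :=
  measurable_of_tendsto_metrizable' (𝓝[>] (0 : ℝ))
    (fun r => (measurable_measure_Ioc_sub ν r).div (measurable_measure_Ioc_sub ρ r))
    (tendsto_pi_nhds.2 fun y => (hg y).comp (tendsto_sub_nhdsGT_zero y))

end Differentiation

section Mixture

variable {Q0 Qs Q1 : Measure ℝ} {l0 l1 : ℝ≥0∞}

theorem div_mixture_eq_inv [IsFiniteMeasure Qs] {s : Set ℝ} (hs : Qs s ≠ 0) :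
    Qs s / (l0 • Q0 + l1 • Q1) s = (l0 * (Q0 s / Qs s) + l1 * (Qs s / Q1 s)⁻¹)⁻¹ := by
  rw [ENNReal.inv_div (Or.inr (measure_ne_top Qs s)) (Or.inr hs), ← mul_div_assoc,
    ← mul_div_assoc, ENNReal.div_add_div_same,
    ENNReal.inv_div (Or.inl (measure_ne_top Qs s)) (Or.inl hs)]
  simp [Measure.add_apply, Measure.smul_apply, smul_eq_mul]

theorem tendsto_div_mixture [IsFiniteMeasure Qs] {ι : Type*} {l : Filter ι} {I : ι → Set ℝ}
    {a b : ℝ≥0∞} (hl0 : l0 ≠ ∞) (hl1 : l1 ≠ ∞) (hI : ∀ᶠ i in l, Qs (I i) ≠ 0)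
    (ha : Tendsto (fun i => Q0 (I i) / Qs (I i)) l (𝓝 a))
    (hb : Tendsto (fun i => Qs (I i) / Q1 (I i)) l (𝓝 b)) :
    Tendsto (fun i => Qs (I i) / (l0 • Q0 + l1 • Q1) (I i)) l (𝓝 (l0 * a + l1 * b⁻¹)⁻¹) := by
  refine (tendsto_inv_iff.2 ((ENNReal.Tendsto.const_mul ha (Or.inr hl0)).add
    (ENNReal.Tendsto.const_mul (tendsto_inv_iff.2 hb) (Or.inr hl1)))).congr' ?_
  filter_upwards [hI] with i hi using (div_mixture_eq_inv hi).symm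

/-- `Q1 / Qs` enters as `(Qs / Q1)⁻¹`, so that both ratios have the form `P / Q` with
`P ≤_lr Q`. -/
def lrDensity (Q0 Qs Q1 : Measure ℝ) (l0 l1 : ℝ≥0∞) : ℝ → ℝ≥0∞ :=
  (leftNullPoints Qs)ᶜ.indicator fun y => (l0 * leftRatio Q0 Qs y + l1 * (leftRatio Qs Q1 y)⁻¹)⁻¹

variable [IsFiniteMeasure Q0] [IsFiniteMeasure Q1]

theorem tendsto_lrDensity [IsFiniteMeasure Qs] (h0s : LikelihoodRatioLE Q0 Qs)
    (hs1 : LikelihoodRatioLE Qs Q1) (hl0 : l0 ≠ ∞) (hl1 : l1 ≠ ∞) (y : ℝ) :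
    Tendsto (fun x => Qs (Ioc x y) / (l0 • Q0 + l1 • Q1) (Ioc x y)) (𝓝[<] y)
      (𝓝 (lrDensity Q0 Qs Q1 l0 l1 y)) := by
  by_cases hy : y ∈ leftNullPoints Qs
  · rw [lrDensity, indicator_of_notMem (notMem_compl_iff.2 hy)]
    refine tendsto_const_nhds.congr' ?_
    filter_upwards [eventually_measure_Ioc_eq_zero hy] with x hx
    simp [hx]
  · rw [lrDensity, indicator_of_mem (mem_compl hy)]
    exact tendsto_div_mixture hl0 hl1
      (eventually_nhdsWithin_of_forall fun x hx => notMem_leftNullPoints.1 hy x hx)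
      (h0s.tendsto_leftRatio y) (hs1.tendsto_leftRatio y)

theorem countable_not_tendsto_lrDensity_right [IsFiniteMeasure Qs]
    (h0s : LikelihoodRatioLE Q0 Qs) (hs1 : LikelihoodRatioLE Qs Q1) (hl0 : l0 ≠ ∞) (hl1 : l1 ≠ ∞) :
    {y | y ∉ leftNullPoints Qs ∧ ¬Tendsto (fun z => Qs (Ioc y z) / (l0 • Q0 + l1 • Q1) (Ioc y z))
      (𝓝[>] y) (𝓝 (lrDensity Q0 Qs Q1 l0 l1 y))}.Countable := by
  refine (((countable_rightNullPoints_diff Qs).union h0s.countable_rightRatio_lt_leftRatio).union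
    hs1.countable_rightRatio_lt_leftRatio).mono fun y ⟨hyL, hy⟩ => ?_
  by_contra hC
  obtain ⟨⟨hyRL, h0⟩, h1⟩ := by simpa only [mem_union, not_or] using hC
  have hyR : y ∉ rightNullPoints Qs := fun h => hyRL ⟨h, hyL⟩
  have hle0 : Qs ≤ Q0 + Qs := Measure.le_add_left le_rfl
  have hle1 : Qs ≤ Qs + Q1 := Measure.le_add_right le_rfl
  have hR0 : y ∉ rightNullPoints (Q0 + Qs) := fun h => hyR (rightNullPoints_anti hle0 h)
  have hR1 : y ∉ rightNullPoints (Qs + Q1) := fun h => hyR (rightNullPoints_anti hle1 h)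
  have e0 := le_antisymm (h0s.rightRatio_le_leftRatio fun h => hyL (leftNullPoints_anti hle0 h))
    (not_lt.1 fun hlt => h0 ⟨hR0, hlt⟩)
  have e1 := le_antisymm (hs1.rightRatio_le_leftRatio fun h => hyL (leftNullPoints_anti hle1 h))
    (not_lt.1 fun hlt => h1 ⟨hR1, hlt⟩)
  apply hy
  rw [lrDensity, indicator_of_mem (mem_compl hyL), ← e0, ← e1]
  exact tendsto_div_mixture hl0 hl1
    (eventually_nhdsWithin_of_forall fun z hz => notMem_rightNullPoints.1 hyR z hz)
    (h0s.tendsto_rightRatio hR0) (hs1.tendsto_rightRatio hR1)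

theorem div_mixture_Ioc_le [IsProbabilityMeasure Qs] (h0s : LikelihoodRatioLE Q0 Qs)
    (hs1 : LikelihoodRatioLE Qs Q1) (x y : ℝ) :
    Qs (Ioc x y) / (l0 • Q0 + l1 • Q1) (Ioc x y) ≤ (l0 * Q0 (Ioi y) + l1 * Q1 (Iic x))⁻¹ := by
  have key : (l0 * Q0 (Ioi y) + l1 * Q1 (Iic x)) * Qs (Ioc x y) ≤ (l0 • Q0 + l1 • Q1) (Ioc x y) :=
    calc (l0 * Q0 (Ioi y) + l1 * Q1 (Iic x)) * Qs (Ioc x y)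
        = l0 * (Qs (Ioc x y) * Q0 (Ioi y)) + l1 * (Q1 (Iic x) * Qs (Ioc x y)) := by ring
      _ ≤ l0 * (Q0 (Ioc x y) * Qs (Ioi y)) + l1 * (Qs (Iic x) * Q1 (Ioc x y)) := by
        gcongr l0 * ?_ + l1 * ?_
        · exact h0s.mul_le_mul measurableSet_Ioc measurableSet_Ioi fun _ hp _ hq => hp.2.trans hq.le
        · exact hs1.mul_le_mul measurableSet_Iic measurableSet_Ioc fun _ hp _ hq => hp.trans hq.1.le
      _ ≤ l0 * Q0 (Ioc x y) + l1 * Q1 (Ioc x y) := by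
        gcongr
        · exact mul_le_of_le_one_right' prob_le_one
        · exact mul_le_of_le_one_left' prob_le_one
      _ = (l0 • Q0 + l1 • Q1) (Ioc x y) := by simp [Measure.add_apply]
  rw [ENNReal.le_inv_iff_mul_le, mul_comm, ← mul_div_assoc]
  exact (ENNReal.div_le_div_right key _).trans ENNReal.div_self_le_one

theorem lrDensity_le [IsProbabilityMeasure Qs] (h0s : LikelihoodRatioLE Q0 Qs)
    (hs1 : LikelihoodRatioLE Qs Q1) (hl0 : l0 ≠ ∞) (hl1 : l1 ≠ ∞) (y : ℝ) :
    lrDensity Q0 Qs Q1 l0 l1 y ≤ (l0 * Q0 (Ioi y) + l1 * Q1 (Iio y))⁻¹ :=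
  le_of_tendsto_of_tendsto' (tendsto_lrDensity h0s hs1 hl0 hl1 y)
    (tendsto_inv_iff.2 (tendsto_const_nhds.add
      (ENNReal.Tendsto.const_mul (tendsto_measure_Iic_nhdsLT Q1 y) (Or.inr hl1))))
    fun x => div_mixture_Ioc_le h0s hs1 x y

theorem absolutelyContinuous_mixture [IsFiniteMeasure Qs] (h0s : LikelihoodRatioLE Q0 Qs)
    (hs1 : LikelihoodRatioLE Qs Q1) (hsupp : ∀ x, 0 < Q0 (Ioi x) + Q1 (Iio x)) (hl0 : l0 ≠ 0)
    (hl1 : l1 ≠ 0) : Qs ≪ l0 • Q0 + l1 • Q1 := by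
  refine Measure.AbsolutelyContinuous.mk fun N hN hQN => ?_
  simp only [Measure.add_apply, Measure.smul_apply, smul_eq_mul, add_eq_zero, mul_eq_zero, hl0,
    hl1, false_or] at hQN
  refine measure_eq_zero_iff_ae_notMem.2 ?_
  filter_upwards [h0s.ae_measure_Ici_eq_zero hN hQN.1, hs1.ae_measure_Iic_eq_zero hN hQN.2]
    with x h0 h1 hx
  refine (hsupp x).ne' ?_
  rw [measure_mono_null Ioi_subset_Ici_self (h0 hx), measure_mono_null Iio_subset_Iic_self (h1 hx),
    add_zero]

end Mixture

theorem exists_ne_top_lrDensity_le {Q0 Qs Q1 : Measure ℝ} [IsProbabilityMeasure Q0]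
    [IsProbabilityMeasure Qs] [IsProbabilityMeasure Q1] (h0s : LikelihoodRatioLE Q0 Qs)
    (hs1 : LikelihoodRatioLE Qs Q1) (hsupp : ∀ x, 0 < Q0 (Ioi x) + Q1 (Iio x)) {l0 l1 : ℝ≥0∞}
    (hl0 : 0 < l0) (hl1 : 0 < l1) (hl0t : l0 ≠ ∞) (hl1t : l1 ≠ ∞) :
    ∃ C : ℝ≥0∞, C ≠ ∞ ∧ ∀ y, lrDensity Q0 Qs Q1 l0 l1 y ≤ C := by
  have := Q0.smul_finite hl0t
  have := Q1.smul_finite hl1t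
  obtain ⟨ε, hε, hεle⟩ := exists_pos_le_measure_Ioi_add_measure_Iio (P := l0 • Q0) (Q := l1 • Q1)
    (fun h => by simpa [hl0.ne'] using congrArg (fun μ : Measure ℝ => μ univ) h)
    (fun h => by simpa [hl1.ne'] using congrArg (fun μ : Measure ℝ => μ univ) h) fun y => by
      simpa [pos_iff_ne_zero, hl0.ne', hl1.ne', not_and_or] using (hsupp y).ne'
  exact ⟨ε⁻¹, ENNReal.inv_ne_top.2 hε.ne', fun y =>
    (lrDensity_le h0s hs1 hl0t hl1t y).trans (ENNReal.inv_le_inv.2 (by simpa using hεle y))⟩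

theorem stmt_18 (Q0 Qs Q1 : Measure ℝ)
    [IsProbabilityMeasure Q0] [IsProbabilityMeasure Qs] [IsProbabilityMeasure Q1]
    (h0s : LikelihoodRatioLE Q0 Qs) (hs1 : LikelihoodRatioLE Qs Q1)
    (hsupp : ∀ x : ℝ, 0 < Q0 (Ioi x) + Q1 (Iio x))
    (l0 l1 : ENNReal) (hl0 : 0 < l0) (hl1 : 0 < l1) (hsum : l0 + l1 = 1) :
    ∃ g : ℝ → ENNReal,
      (∀ y : ℝ, Tendsto (fun x => Qs (Ioc x y) / (l0 • Q0 + l1 • Q1) (Ioc x y))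
        (nhdsWithin y (Iio y)) (nhds (g y))) ∧
      (∃ C : ENNReal, C ≠ ⊤ ∧ ∀ y, g y ≤ C) ∧
      Measurable g ∧
      (∀ B : Set ℝ, MeasurableSet B → Qs B = ∫⁻ x in B, g x ∂(l0 • Q0 + l1 • Q1)) := by
  have hl0t : l0 ≠ ∞ := ne_top_of_le_ne_top ENNReal.one_ne_top (hsum ▸ le_self_add)
  have hl1t : l1 ≠ ∞ := ne_top_of_le_ne_top ENNReal.one_ne_top (hsum ▸ le_add_self)
  have := Q0.smul_finite hl0t
  have := Q1.smul_finite hl1t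
  have hleft := tendsto_lrDensity h0s hs1 hl0t hl1t
  refine ⟨lrDensity Q0 Qs Q1 l0 l1, hleft,
    exists_ne_top_lrDensity_le h0s hs1 hsupp hl0 hl1 hl0t hl1t,
    measurable_of_tendsto_div_Ioc hleft, fun B _ => ?_⟩
  rw [lintegral_congr_ae (ae_restrict_of_ae (ae_eq_rnDeriv_of_tendsto_div_Ioc hleft
    (countable_not_tendsto_lrDensity_right h0s hs1 hl0t hl1t))), Measure.setLIntegral_rnDeriv
    (absolutelyContinuous_mixture h0s hs1 hsupp hl0.ne' hl1.ne')]
end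
end

section
/- Let R̂ be a probability measure on ℝ×ℝ with finite support. Then there exists a TP2 probability measure Ř on ℝ×ℝ minimizing the Kuiper distance ‖R̃ − R̂‖_K over all TP2 probability measures R̃ on ℝ×ℝ; i.e. ‖Ř − R̂‖_K = inf{‖R̃ − R̂‖_K : R̃ a TP2 probability measure on ℝ×ℝ} and this infimum is attained. -/
open MeasureTheory Set Filter

noncomputable section

/-- A probability measure `R` on `ℝ × ℝ` is totally positive of order two (TP2) if
for arbitrary Borel sets `A1 < A2` and `B1 < B2` (element-wise),
`R(A2×B1) * R(A1×B2) ≤ R(A1×B1) * R(A2×B2)`. -/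
def IsTP2 (R : Measure (ℝ × ℝ)) : Prop :=
  ∀ A1 A2 B1 B2 : Set ℝ, MeasurableSet A1 → MeasurableSet A2 →
    MeasurableSet B1 → MeasurableSet B2 →
    (∀ a1 ∈ A1, ∀ a2 ∈ A2, a1 < a2) → (∀ b1 ∈ B1, ∀ b2 ∈ B2, b1 < b2) →
    R (A2 ×ˢ B1) * R (A1 ×ˢ B2) ≤ R (A1 ×ˢ B1) * R (A2 ×ˢ B2)

/-- The bivariate Kuiper distance between two finite measures on `ℝ × ℝ`:
the supremum of `|R(S) - S(S)|` over all half-open boxes `(a1,a2] × (b1,b2]`. -/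
def kuiperDist (R S : Measure (ℝ × ℝ)) : ℝ :=
  sSup {d : ℝ | ∃ a1 a2 b1 b2 : ℝ, a1 < a2 ∧ b1 < b2 ∧
    d = |(R (Ioc a1 a2 ×ˢ Ioc b1 b2)).toReal - (S (Ioc a1 a2 ×ˢ Ioc b1 b2)).toReal|}

open scoped Classical

namespace Stmt19Aux

variable (G : Finset ℝ) (hG : G.Nonempty)

/-- round `x` up to the smallest grid point `≥ x`, or to the max grid point if none. -/
def rnd (x : ℝ) : ℝ :=
  if h : (G.filter (fun g => x ≤ g)).Nonempty then (G.filter (fun g => x ≤ g)).min' h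
  else G.max' hG

lemma rnd_mem (x : ℝ) : rnd G hG x ∈ G := by
  unfold rnd
  split
  · next h => exact (Finset.mem_filter.1 ((G.filter _).min'_mem h)).1
  · exact G.max'_mem hG

lemma rnd_le_of {x g : ℝ} (hg : g ∈ G) (hxg : x ≤ g) : rnd G hG x ≤ g := by
  have hmem : g ∈ G.filter (fun g => x ≤ g) := Finset.mem_filter.2 ⟨hg, hxg⟩
  unfold rnd
  split
  · exact Finset.min'_le _ _ hmem
  · next h => exact absurd ⟨g, hmem⟩ h

lemma rnd_le_max (x : ℝ) : rnd G hG x ≤ G.max' hG := by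
  rcases le_or_gt x (G.max' hG) with h | h
  · exact rnd_le_of G hG (G.max'_mem hG) h
  · unfold rnd
    split
    · next hne =>
      exfalso
      obtain ⟨g, hg⟩ := hne
      rcases Finset.mem_filter.1 hg with ⟨hg1, hg2⟩
      have := G.le_max' _ hg1
      linarith
    · exact le_rfl

lemma le_rnd {x : ℝ} (hx : x ≤ G.max' hG) : x ≤ rnd G hG x := by
  have hne : (G.filter (fun g => x ≤ g)).Nonempty :=
    ⟨G.max' hG, Finset.mem_filter.2 ⟨G.max'_mem hG, hx⟩⟩
  unfold rnd
  rw [dif_pos hne]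
  exact (Finset.mem_filter.1 ((G.filter _).min'_mem hne)).2

lemma rnd_gt_max {x : ℝ} (hx : G.max' hG < x) : rnd G hG x = G.max' hG := by
  have hne : ¬(G.filter (fun g => x ≤ g)).Nonempty := by
    rintro ⟨g, hg⟩
    rcases Finset.mem_filter.1 hg with ⟨hg1, hg2⟩
    have := G.le_max' _ hg1
    linarith
  unfold rnd
  rw [dif_neg hne]

lemma rnd_fix {x : ℝ} (hx : x ∈ G) : rnd G hG x = x :=
  le_antisymm (rnd_le_of G hG hx le_rfl) (le_rnd G hG (G.le_max' _ hx))

lemma rnd_mono : Monotone (rnd G hG) := by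
  intro x y hxy
  by_cases hy : y ≤ G.max' hG
  · exact rnd_le_of G hG (rnd_mem G hG y) (le_trans hxy (le_rnd G hG hy))
  · rw [rnd_gt_max G hG (not_le.1 hy)]
    exact rnd_le_max G hG x

/-- preimage of a half-open interval under `rnd`, intersected with a big box,
is a half-open interval. -/
lemma rnd_preimage (a1 a2 k : ℝ) :
    ∃ α β : ℝ, rnd G hG ⁻¹' (Ioc a1 a2) ∩ Ioc (-k) k = Ioc α β := by
  set M := G.max' hG with hM
  set T := G.filter (fun g => a1 < g ∧ g ≤ a2) with hT
  set L := G.filter (fun g => g ≤ a1) with hL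
  by_cases hTne : T.Nonempty
  · refine ⟨(if hLne : L.Nonempty then max (L.max' hLne) (-k) else -k),
      if a1 < M ∧ M ≤ a2 then k else min (T.max' hTne) k, ?_⟩
    ext x
    simp only [mem_inter_iff, mem_preimage, mem_Ioc]
    constructor
    · rintro ⟨⟨h1, h2⟩, h3, h4⟩
      constructor
      · split
        · next hLne =>
          rw [max_lt_iff]
          refine ⟨?_, h3⟩
          by_contra hxc
          push_neg at hxc
          have : rnd G hG x ≤ L.max' hLne :=
            rnd_le_of G hG (Finset.mem_filter.1 (L.max'_mem hLne)).1 hxc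
          exact absurd h1 (not_lt.2 (le_trans this (Finset.mem_filter.1 (L.max'_mem hLne)).2))
        · exact h3
      · split
        · exact h4
        · next hMc =>
          refine le_min ?_ h4
          have hxM : x ≤ M := by
            by_contra hc
            push_neg at hc
            rw [rnd_gt_max G hG hc] at h1 h2
            exact hMc ⟨h1, h2⟩
          have : rnd G hG x ∈ T := Finset.mem_filter.2 ⟨rnd_mem G hG x, h1, h2⟩
          exact le_trans (le_rnd G hG hxM) (T.le_max' _ this)
    · rintro ⟨h1, h2⟩
      have hTM : T.max' hTne ≤ M := G.le_max' _ (Finset.mem_filter.1 (T.max'_mem hTne)).1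
      have hTa2 : T.max' hTne ≤ a2 := (Finset.mem_filter.1 (T.max'_mem hTne)).2.2
      have hkx : -k < x := by
        by_cases hLne : L.Nonempty
        · rw [dif_pos hLne] at h1; exact lt_of_le_of_lt (le_max_right _ _) h1
        · rwa [dif_neg hLne] at h1
      have hxk : x ≤ k := by
        split at h2
        · exact h2
        · exact le_trans h2 (min_le_right _ _)
      refine ⟨⟨?_, ?_⟩, hkx, hxk⟩
      · -- a1 < rnd x
        by_contra hc
        push_neg at hc
        have hrL : rnd G hG x ∈ L := Finset.mem_filter.2 ⟨rnd_mem G hG x, hc⟩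
        have hLne : L.Nonempty := ⟨_, hrL⟩
        rw [dif_pos hLne] at h1
        have hxr : x ≤ rnd G hG x := by
          apply le_rnd G hG
          by_contra hxM
          push_neg at hxM
          rw [rnd_gt_max G hG hxM] at hc
          split at h2
          · next hMc => linarith [hMc.1]
          · have : x ≤ M := le_trans (le_trans h2 (min_le_left _ _)) hTM
            linarith
        have : rnd G hG x ≤ L.max' hLne := L.le_max' _ hrL
        have : L.max' hLne < x := lt_of_le_of_lt (le_max_left _ _) h1
        linarith
      · -- rnd x ≤ a2
        split at h2
        · next hMc => exact le_trans (rnd_le_max G hG x) hMc.2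
        · exact le_trans (rnd_le_of G hG (Finset.mem_filter.1 (T.max'_mem hTne)).1
            (le_trans h2 (min_le_left _ _))) hTa2
  · refine ⟨0, 0, ?_⟩
    rw [Set.Ioc_self]
    ext x
    simp only [mem_inter_iff, mem_preimage, mem_Ioc, mem_empty_iff_false, iff_false]
    rintro ⟨⟨h1, h2⟩, _⟩
    exact hTne ⟨rnd G hG x, Finset.mem_filter.2 ⟨rnd_mem G hG x, h1, h2⟩⟩


def kuiperSet (R S : Measure (ℝ × ℝ)) : Set ℝ :=
  {d : ℝ | ∃ a1 a2 b1 b2 : ℝ, a1 < a2 ∧ b1 < b2 ∧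
    d = |(R (Ioc a1 a2 ×ˢ Ioc b1 b2)).toReal - (S (Ioc a1 a2 ×ˢ Ioc b1 b2)).toReal|}

lemma kuiperDist_eq (R S : Measure (ℝ × ℝ)) : kuiperDist R S = sSup (kuiperSet R S) := rfl

lemma kuiperSet_nonempty (R S : Measure (ℝ × ℝ)) : (kuiperSet R S).Nonempty :=
  ⟨_, 0, 1, 0, 1, zero_lt_one, zero_lt_one, rfl⟩

lemma kuiperSet_bddAbove (R S : Measure (ℝ × ℝ)) [IsFiniteMeasure R] [IsFiniteMeasure S] :
    BddAbove (kuiperSet R S) := by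
  refine ⟨(R univ).toReal + (S univ).toReal, ?_⟩
  rintro d ⟨a1, a2, b1, b2, _, _, rfl⟩
  have h1 : (R (Ioc a1 a2 ×ˢ Ioc b1 b2)).toReal ≤ (R univ).toReal :=
    ENNReal.toReal_mono (measure_ne_top R _) (measure_mono (subset_univ _))
  have h2 : (S (Ioc a1 a2 ×ˢ Ioc b1 b2)).toReal ≤ (S univ).toReal :=
    ENNReal.toReal_mono (measure_ne_top S _) (measure_mono (subset_univ _))
  have h3 : (0:ℝ) ≤ (R (Ioc a1 a2 ×ˢ Ioc b1 b2)).toReal := ENNReal.toReal_nonneg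
  have h4 : (0:ℝ) ≤ (S (Ioc a1 a2 ×ˢ Ioc b1 b2)).toReal := ENNReal.toReal_nonneg
  rw [abs_le]
  constructor <;> nlinarith [ENNReal.toReal_nonneg (a := R univ), ENNReal.toReal_nonneg (a := S univ)]

lemma kuiperDist_nonneg (R S : Measure (ℝ × ℝ)) [IsFiniteMeasure R] [IsFiniteMeasure S] :
    0 ≤ kuiperDist R S := by
  obtain ⟨d, hd⟩ := kuiperSet_nonempty R S
  have hd0 : 0 ≤ d := by obtain ⟨_, _, _, _, _, _, rfl⟩ := hd; exact abs_nonneg _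
  exact le_trans hd0 (le_csSup (kuiperSet_bddAbove R S) hd)

lemma abs_le_kuiperDist (R S : Measure (ℝ × ℝ)) [IsFiniteMeasure R] [IsFiniteMeasure S]
    {α β γ δ : ℝ} :
    |(R (Ioc α β ×ˢ Ioc γ δ)).toReal - (S (Ioc α β ×ˢ Ioc γ δ)).toReal| ≤ kuiperDist R S := by
  by_cases h1 : α < β
  · by_cases h2 : γ < δ
    · exact le_csSup (kuiperSet_bddAbove R S) ⟨α, β, γ, δ, h1, h2, rfl⟩
    · rw [Set.Ioc_eq_empty h2, Set.prod_empty, measure_empty, measure_empty]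
      simpa using kuiperDist_nonneg R S
  · rw [Set.Ioc_eq_empty h1, Set.empty_prod, measure_empty, measure_empty]
    simpa using kuiperDist_nonneg R S

/-- Key limiting lemma: if `E` and `F` are "locally Ioc" sets, the discrepancy
on `E ×ˢ F` is bounded by the Kuiper distance. -/
lemma abs_sub_le_kuiper (R S : Measure (ℝ × ℝ)) [IsProbabilityMeasure R] [IsProbabilityMeasure S]
    (E F : Set ℝ)
    (hE : ∀ k : ℕ, ∃ α β : ℝ, E ∩ Ioc (-(k:ℝ)) k = Ioc α β)
    (hF : ∀ k : ℕ, ∃ α β : ℝ, F ∩ Ioc (-(k:ℝ)) k = Ioc α β) :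
    |(R (E ×ˢ F)).toReal - (S (E ×ˢ F)).toReal| ≤ kuiperDist R S := by
  set u : ℕ → Set (ℝ × ℝ) := fun k => (E ∩ Ioc (-(k:ℝ)) k) ×ˢ (F ∩ Ioc (-(k:ℝ)) k) with hu
  have hmono : Monotone u := by
    intro m n hmn
    have hIoc : Ioc (-(m:ℝ)) m ⊆ Ioc (-(n:ℝ)) n := by
      apply Set.Ioc_subset_Ioc <;> [skip; exact_mod_cast hmn]
      simp only [neg_le_neg_iff]; exact_mod_cast hmn
    exact Set.prod_mono (inter_subset_inter_right _ hIoc) (inter_subset_inter_right _ hIoc)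
  have hunion : ⋃ k, u k = E ×ˢ F := by
    apply Subset.antisymm
    · exact iUnion_subset fun k =>
        Set.prod_mono (inter_subset_left) (inter_subset_left)
    · rintro ⟨x, y⟩ ⟨hx, hy⟩
      obtain ⟨k, hk⟩ := exists_nat_gt (max |x| |y|)
      have hxk : |x| < k := lt_of_le_of_lt (le_max_left _ _) hk
      have hyk : |y| < k := lt_of_le_of_lt (le_max_right _ _) hk
      rw [abs_lt] at hxk hyk
      exact mem_iUnion.2 ⟨k, ⟨⟨hx, hxk.1, hxk.2.le⟩, ⟨hy, hyk.1, hyk.2.le⟩⟩⟩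
  have hR : Tendsto (fun k => (R (u k)).toReal) atTop (nhds ((R (E ×ˢ F)).toReal)) := by
    rw [← hunion]
    exact (ENNReal.tendsto_toReal (by rw [hunion]; exact measure_ne_top R _)).comp
      (tendsto_measure_iUnion_atTop hmono)
  have hS : Tendsto (fun k => (S (u k)).toReal) atTop (nhds ((S (E ×ˢ F)).toReal)) := by
    rw [← hunion]
    exact (ENNReal.tendsto_toReal (by rw [hunion]; exact measure_ne_top S _)).comp
      (tendsto_measure_iUnion_atTop hmono)
  have htend : Tendsto (fun k => |(R (u k)).toReal - (S (u k)).toReal|) atTop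
      (nhds (|(R (E ×ˢ F)).toReal - (S (E ×ˢ F)).toReal|)) := (hR.sub hS).abs
  apply le_of_tendsto' htend
  intro k
  obtain ⟨α, β, hαβ⟩ := hE k
  obtain ⟨γ, δ, hγδ⟩ := hF k
  have : u k = Ioc α β ×ˢ Ioc γ δ := by rw [hu]; simp only; rw [hαβ, hγδ]
  rw [this]
  exact abs_le_kuiperDist R S


variable (P : Finset (ℝ × ℝ))

/-- measure on `ℝ × ℝ` given by weights on the points of `P`. -/
def Meas (w : {p // p ∈ P} → ℝ) : Measure (ℝ × ℝ) :=
  ∑ p : {p // p ∈ P}, ENNReal.ofReal (w p) • Measure.dirac (p : ℝ × ℝ)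

/-- real-valued mass of `S`. -/
def mR (w : {p // p ∈ P} → ℝ) (S : Set (ℝ × ℝ)) : ℝ :=
  ∑ p : {p // p ∈ P}, if (p : ℝ × ℝ) ∈ S then w p else 0

lemma Meas_apply (w : {p // p ∈ P} → ℝ) {S : Set (ℝ × ℝ)} (hS : MeasurableSet S) :
    Meas P w S = ∑ p : {p // p ∈ P}, if (p : ℝ × ℝ) ∈ S then ENNReal.ofReal (w p) else 0 := by
  rw [Meas, Measure.finset_sum_apply]
  refine Finset.sum_congr rfl fun p _ => ?_
  rw [Measure.smul_apply, Measure.dirac_apply' _ hS, smul_eq_mul]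
  by_cases h : (p : ℝ × ℝ) ∈ S
  · rw [if_pos h, indicator_of_mem h, Pi.one_apply, mul_one]
  · rw [if_neg h, indicator_of_notMem h, mul_zero]

lemma Meas_apply_ofReal (w : {p // p ∈ P} → ℝ) (hw : ∀ p, 0 ≤ w p) {S : Set (ℝ × ℝ)}
    (hS : MeasurableSet S) : Meas P w S = ENNReal.ofReal (mR P w S) := by
  rw [Meas_apply P w hS, mR, ENNReal.ofReal_sum_of_nonneg (fun p _ => by
    by_cases h : (p : ℝ × ℝ) ∈ S
    · rw [if_pos h]; exact hw p
    · rw [if_neg h])]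
  refine Finset.sum_congr rfl fun p _ => ?_
  by_cases h : (p : ℝ × ℝ) ∈ S <;> simp [h]

lemma mR_nonneg (w : {p // p ∈ P} → ℝ) (hw : ∀ p, 0 ≤ w p) (S : Set (ℝ × ℝ)) :
    0 ≤ mR P w S := by
  refine Finset.sum_nonneg fun p _ => ?_
  by_cases h : (p : ℝ × ℝ) ∈ S <;> simp [h, hw p]

lemma Meas_toReal (w : {p // p ∈ P} → ℝ) {S : Set (ℝ × ℝ)} (hS : MeasurableSet S) :
    (Meas P w S).toReal = ∑ p : {p // p ∈ P}, if (p : ℝ × ℝ) ∈ S then max (w p) 0 else 0 := by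
  have hne : ∀ p ∈ (Finset.univ : Finset {p // p ∈ P}),
      (if (p : ℝ × ℝ) ∈ S then ENNReal.ofReal (w p) else 0) ≠ ⊤ := by
    intro p _
    by_cases h : (p : ℝ × ℝ) ∈ S <;> simp [h]
  rw [Meas_apply P w hS, ENNReal.toReal_sum hne]
  refine Finset.sum_congr rfl fun p _ => ?_
  by_cases h : (p : ℝ × ℝ) ∈ S <;> simp [h, ENNReal.toReal_ofReal']

lemma mR_continuous (S : Set (ℝ × ℝ)) : Continuous (fun w : {p // p ∈ P} → ℝ => mR P w S) := by
  unfold mR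
  refine continuous_finset_sum _ fun p _ => ?_
  by_cases h : (p : ℝ × ℝ) ∈ S
  · simp only [if_pos h]; exact continuous_apply p
  · simp only [if_neg h]; exact continuous_const

/-- the feasibility set. -/
def K (P : Finset (ℝ × ℝ)) : Set ({p // p ∈ P} → ℝ) :=
  {w | (∀ p, 0 ≤ w p) ∧ (∑ p, w p) = 1 ∧
    ∀ A1 A2 B1 B2 : Set ℝ, MeasurableSet A1 → MeasurableSet A2 →
      MeasurableSet B1 → MeasurableSet B2 →
      (∀ a1 ∈ A1, ∀ a2 ∈ A2, a1 < a2) → (∀ b1 ∈ B1, ∀ b2 ∈ B2, b1 < b2) →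
      mR P w (A2 ×ˢ B1) * mR P w (A1 ×ˢ B2) ≤ mR P w (A1 ×ˢ B1) * mR P w (A2 ×ˢ B2)}

lemma K_closed : IsClosed (K P) := by
  have h1 : IsClosed {w : {p // p ∈ P} → ℝ | ∀ p, 0 ≤ w p} := by
    have : {w : {p // p ∈ P} → ℝ | ∀ p, 0 ≤ w p} = ⋂ p, {w | 0 ≤ w p} := by
      ext w; simp [mem_iInter]
    rw [this]
    exact isClosed_iInter fun p => isClosed_le continuous_const (continuous_apply p)
  have h2 : IsClosed {w : {p // p ∈ P} → ℝ | (∑ p, w p) = 1} :=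
    isClosed_eq (continuous_finset_sum _ fun p _ => continuous_apply p) continuous_const
  have h3 : IsClosed {w : {p // p ∈ P} → ℝ |
      ∀ A1 A2 B1 B2 : Set ℝ, MeasurableSet A1 → MeasurableSet A2 →
      MeasurableSet B1 → MeasurableSet B2 →
      (∀ a1 ∈ A1, ∀ a2 ∈ A2, a1 < a2) → (∀ b1 ∈ B1, ∀ b2 ∈ B2, b1 < b2) →
      mR P w (A2 ×ˢ B1) * mR P w (A1 ×ˢ B2) ≤ mR P w (A1 ×ˢ B1) * mR P w (A2 ×ˢ B2)} := by
    have : {w : {p // p ∈ P} → ℝ |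
        ∀ A1 A2 B1 B2 : Set ℝ, MeasurableSet A1 → MeasurableSet A2 →
        MeasurableSet B1 → MeasurableSet B2 →
        (∀ a1 ∈ A1, ∀ a2 ∈ A2, a1 < a2) → (∀ b1 ∈ B1, ∀ b2 ∈ B2, b1 < b2) →
        mR P w (A2 ×ˢ B1) * mR P w (A1 ×ˢ B2) ≤ mR P w (A1 ×ˢ B1) * mR P w (A2 ×ˢ B2)} =
        ⋂ (A1) (A2) (B1) (B2) (_ : MeasurableSet A1) (_ : MeasurableSet A2)
          (_ : MeasurableSet B1) (_ : MeasurableSet B2)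
          (_ : ∀ a1 ∈ A1, ∀ a2 ∈ A2, a1 < a2) (_ : ∀ b1 ∈ B1, ∀ b2 ∈ B2, b1 < b2),
          {w | mR P w (A2 ×ˢ B1) * mR P w (A1 ×ˢ B2) ≤
            mR P w (A1 ×ˢ B1) * mR P w (A2 ×ˢ B2)} := by
      ext w
      simp only [mem_setOf_eq, mem_iInter]
    rw [this]
    refine isClosed_iInter fun A1 => isClosed_iInter fun A2 => isClosed_iInter fun B1 =>
      isClosed_iInter fun B2 => isClosed_iInter fun _ => isClosed_iInter fun _ =>
      isClosed_iInter fun _ => isClosed_iInter fun _ => isClosed_iInter fun _ =>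
      isClosed_iInter fun _ =>
      isClosed_le ((mR_continuous P _).mul (mR_continuous P _))
        ((mR_continuous P _).mul (mR_continuous P _))
  exact h1.inter (h2.inter h3)


lemma Meas_finite (P : Finset (ℝ × ℝ)) (w : {p // p ∈ P} → ℝ) : IsFiniteMeasure (Meas P w) := by
  constructor
  rw [Meas_apply P w MeasurableSet.univ]
  simp only [Set.mem_univ, if_true]
  exact ENNReal.sum_lt_top.2 fun p _ => ENNReal.ofReal_lt_top

lemma mR_single (P : Finset (ℝ × ℝ)) (p₀ : {p // p ∈ P}) (S : Set (ℝ × ℝ)) :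
    mR P (fun p => if p = p₀ then (1:ℝ) else 0) S = if (p₀ : ℝ × ℝ) ∈ S then 1 else 0 := by
  unfold mR
  have h : ∀ p : {p // p ∈ P},
      (if (p : ℝ × ℝ) ∈ S then (if p = p₀ then (1:ℝ) else 0) else 0) =
      if p = p₀ then (if (p₀ : ℝ × ℝ) ∈ S then (1:ℝ) else 0) else 0 := by
    intro p
    by_cases hp : p = p₀
    · subst hp; simp
    · simp [hp]
  simp_rw [h]
  rw [Finset.sum_ite_eq' Finset.univ p₀]
  simp

lemma K_nonempty (P : Finset (ℝ × ℝ)) (p₀ : {p // p ∈ P}) :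
    (fun p => if p = p₀ then (1:ℝ) else 0) ∈ K P := by
  refine ⟨fun p => by by_cases h : p = p₀ <;> simp [h],
    by rw [Finset.sum_ite_eq' Finset.univ p₀]; simp, ?_⟩
  intro A1 A2 B1 B2 _ _ _ _ hA hB
  rw [mR_single, mR_single, mR_single, mR_single]
  by_cases h1 : (p₀ : ℝ × ℝ) ∈ A2 ×ˢ B1
  · by_cases h2 : (p₀ : ℝ × ℝ) ∈ A1 ×ˢ B2
    · exact absurd (hA _ h2.1 _ h1.1) (lt_irrefl _)
    · rw [if_neg h2, mul_zero]; apply mul_nonneg <;> split <;> norm_num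
  · rw [if_neg h1, zero_mul]; apply mul_nonneg <;> split <;> norm_num

lemma K_compact (P : Finset (ℝ × ℝ)) : IsCompact (K P) := by
  apply Metric.isCompact_of_isClosed_isBounded (K_closed P)
  apply (Metric.isBounded_closedBall (x := (0 : {p // p ∈ P} → ℝ)) (r := 1)).subset
  intro w hw
  rw [Metric.mem_closedBall]
  rw [dist_pi_le_iff (by norm_num)]
  intro p
  rw [Pi.zero_apply, Real.dist_eq, sub_zero, abs_of_nonneg (hw.1 p)]
  calc w p ≤ ∑ q, w q := Finset.single_le_sum (fun q _ => hw.1 q) (Finset.mem_univ p)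
  _ = 1 := hw.2.1

variable (Rhat : Measure (ℝ × ℝ)) [IsProbabilityMeasure Rhat]

lemma D_le (P : Finset (ℝ × ℝ)) (w w' : {p // p ∈ P} → ℝ) :
    kuiperDist (Meas P w) Rhat ≤ kuiperDist (Meas P w') Rhat +
      (Fintype.card {p // p ∈ P} : ℝ) * dist w w' := by
  haveI := Meas_finite P w
  haveI := Meas_finite P w'
  set N : ℝ := (Fintype.card {p // p ∈ P} : ℝ) with hN
  rw [kuiperDist_eq]
  apply Real.sSup_le
  · rintro d ⟨a1, a2, b1, b2, hlt1, hlt2, rfl⟩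
    have hBm : MeasurableSet (Ioc a1 a2 ×ˢ Ioc b1 b2) :=
      measurableSet_Ioc.prod measurableSet_Ioc
    have h1 : |(Meas P w' (Ioc a1 a2 ×ˢ Ioc b1 b2)).toReal -
        (Rhat (Ioc a1 a2 ×ˢ Ioc b1 b2)).toReal| ≤ kuiperDist (Meas P w') Rhat :=
      le_csSup (kuiperSet_bddAbove _ _) ⟨a1, a2, b1, b2, hlt1, hlt2, rfl⟩
    have h2 : |(Meas P w (Ioc a1 a2 ×ˢ Ioc b1 b2)).toReal -
        (Meas P w' (Ioc a1 a2 ×ˢ Ioc b1 b2)).toReal| ≤ N * dist w w' := by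
      rw [Meas_toReal P w hBm, Meas_toReal P w' hBm, ← Finset.sum_sub_distrib]
      refine le_trans (Finset.abs_sum_le_sum_abs _ _) (le_trans
        (Finset.sum_le_sum (g := fun _ => dist w w') ?_) ?_)
      · intro p _
        by_cases h : (p:ℝ×ℝ) ∈ Ioc a1 a2 ×ˢ Ioc b1 b2
        · rw [if_pos h, if_pos h]
          calc |max (w p) 0 - max (w' p) 0| ≤ |w p - w' p| := abs_max_sub_max_le_abs _ _ _
            _ = dist (w p) (w' p) := (Real.dist_eq _ _).symm
            _ ≤ dist w w' := dist_le_pi_dist w w' p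
        · rw [if_neg h, if_neg h]; simpa using dist_nonneg
      · rw [Finset.sum_const, Finset.card_univ, nsmul_eq_mul]
    calc |(Meas P w (Ioc a1 a2 ×ˢ Ioc b1 b2)).toReal -
            (Rhat (Ioc a1 a2 ×ˢ Ioc b1 b2)).toReal|
        ≤ |(Meas P w (Ioc a1 a2 ×ˢ Ioc b1 b2)).toReal -
            (Meas P w' (Ioc a1 a2 ×ˢ Ioc b1 b2)).toReal| +
          |(Meas P w' (Ioc a1 a2 ×ˢ Ioc b1 b2)).toReal -
            (Rhat (Ioc a1 a2 ×ˢ Ioc b1 b2)).toReal| := abs_sub_le _ _ _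
      _ ≤ kuiperDist (Meas P w') Rhat + N * dist w w' := by linarith
  · exact add_nonneg (kuiperDist_nonneg _ _)
      (mul_nonneg (Nat.cast_nonneg _) dist_nonneg)

lemma D_continuous (P : Finset (ℝ × ℝ)) :
    Continuous (fun w : {p // p ∈ P} → ℝ => kuiperDist (Meas P w) Rhat) := by
  set N' : NNReal := (Fintype.card {p // p ∈ P} : NNReal)
  apply (LipschitzWith.of_dist_le_mul (K := N')
    (f := fun w : {p // p ∈ P} → ℝ => kuiperDist (Meas P w) Rhat) ?_).continuous
  intro w w'
  have h1 := D_le Rhat P w w'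
  have h2 := D_le Rhat P w' w
  rw [dist_comm w' w] at h2
  rw [Real.dist_eq]
  have hNN : ((N' : NNReal) : ℝ) = (Fintype.card {p // p ∈ P} : ℝ) := by
    simp [N']
  rw [hNN]
  exact abs_sub_le_iff.2 ⟨by linarith, by linarith⟩

end Stmt19Aux

open Stmt19Aux

theorem stmt_19 (Rhat : Measure (ℝ × ℝ)) [IsProbabilityMeasure Rhat]
    (hfin : ∃ s : Finset (ℝ × ℝ), Rhat ((s : Set (ℝ × ℝ))ᶜ) = 0) :
    ∃ Rcheck : Measure (ℝ × ℝ), IsProbabilityMeasure Rcheck ∧ IsTP2 Rcheck ∧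
      ∀ Rtilde : Measure (ℝ × ℝ), IsProbabilityMeasure Rtilde → IsTP2 Rtilde →
        kuiperDist Rcheck Rhat ≤ kuiperDist Rtilde Rhat := by
  obtain ⟨s, hs⟩ := hfin
  set Gx : Finset ℝ := insert 0 (s.image Prod.fst) with hGxdef
  set Gy : Finset ℝ := insert 0 (s.image Prod.snd) with hGydef
  have hGx : Gx.Nonempty := ⟨0, Finset.mem_insert_self _ _⟩
  have hGy : Gy.Nonempty := ⟨0, Finset.mem_insert_self _ _⟩
  set P : Finset (ℝ × ℝ) := Gx ×ˢ Gy with hPdef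
  have hp₀ : ((0:ℝ), (0:ℝ)) ∈ P :=
    Finset.mem_product.2 ⟨Finset.mem_insert_self _ _, Finset.mem_insert_self _ _⟩
  -- minimize over the compact feasible set
  obtain ⟨w, hwK, hwmin⟩ := (K_compact P).exists_isMinOn ⟨_, K_nonempty P ⟨_, hp₀⟩⟩
    ((D_continuous Rhat P).continuousOn)
  have hw0 : ∀ p, 0 ≤ w p := hwK.1
  refine ⟨Meas P w, ?_, ?_, ?_⟩
  · constructor
    rw [Meas_apply_ofReal P w hw0 MeasurableSet.univ]
    have : mR P w univ = 1 := by
      rw [← hwK.2.1]; unfold mR; simp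
    rw [this, ENNReal.ofReal_one]
  · intro A1 A2 B1 B2 m1 m2 m3 m4 hA hB
    rw [Meas_apply_ofReal P w hw0 (m2.prod m3), Meas_apply_ofReal P w hw0 (m1.prod m4),
      Meas_apply_ofReal P w hw0 (m1.prod m3), Meas_apply_ofReal P w hw0 (m2.prod m4),
      ← ENNReal.ofReal_mul (mR_nonneg P w hw0 _), ← ENNReal.ofReal_mul (mR_nonneg P w hw0 _)]
    exact ENNReal.ofReal_le_ofReal (hwK.2.2 A1 A2 B1 B2 m1 m2 m3 m4 hA hB)
  · intro Rtilde hProb hTP2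
    haveI := hProb
    set f : ℝ → ℝ := rnd Gx hGx with hfdef
    set g : ℝ → ℝ := rnd Gy hGy with hgdef
    have hf : Measurable f := (rnd_mono Gx hGx).measurable
    have hg : Measurable g := (rnd_mono Gy hGy).measurable
    set Φ : ℝ × ℝ → ℝ × ℝ := fun p => (f p.1, g p.2) with hΦdef
    have hΦ : Measurable Φ := (hf.comp measurable_fst).prodMk (hg.comp measurable_snd)
    set R' : Measure (ℝ × ℝ) := Rtilde.map Φ with hR'def
    haveI : IsProbabilityMeasure R' := Measure.isProbabilityMeasure_map hΦ.aemeasurable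
    have hpre : ∀ A B : Set ℝ, Φ ⁻¹' (A ×ˢ B) = (f ⁻¹' A) ×ˢ (g ⁻¹' B) := fun A B => rfl
    -- R' is TP2
    have hR'TP2 : IsTP2 R' := by
      intro A1 A2 B1 B2 m1 m2 m3 m4 hA hB
      rw [hR'def, Measure.map_apply hΦ (m2.prod m3), Measure.map_apply hΦ (m1.prod m4),
        Measure.map_apply hΦ (m1.prod m3), Measure.map_apply hΦ (m2.prod m4),
        hpre, hpre, hpre, hpre]
      refine hTP2 _ _ _ _ (hf m1) (hf m2) (hg m3) (hg m4) ?_ ?_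
      · intro a1 ha1 a2 ha2
        by_contra hc
        push_neg at hc
        exact absurd (hA _ ha1 _ ha2) (not_lt.2 (rnd_mono Gx hGx hc))
      · intro b1 hb1 b2 hb2
        by_contra hc
        push_neg at hc
        exact absurd (hB _ hb1 _ hb2) (not_lt.2 (rnd_mono Gy hGy hc))
    -- R' lives on P
    have hNull : R' ((↑P : Set (ℝ × ℝ))ᶜ) = 0 := by
      rw [hR'def, Measure.map_apply hΦ (P.finite_toSet.measurableSet.compl)]
      have : Φ ⁻¹' ((↑P : Set (ℝ × ℝ))ᶜ) = ∅ := by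
        ext p
        simp only [mem_preimage, mem_compl_iff, Finset.mem_coe, mem_empty_iff_false,
          iff_false, not_not]
        exact Finset.mem_product.2 ⟨rnd_mem Gx hGx _, rnd_mem Gy hGy _⟩
      rw [this, measure_empty]
    have hInterP : ∀ X : Set (ℝ × ℝ), R' X = R' (X ∩ ↑P) := by
      intro X
      refine le_antisymm ?_ (measure_mono inter_subset_left)
      refine le_trans (measure_le_inter_add_diff R' X ↑P) ?_
      rw [measure_mono_null (diff_subset_compl X ↑P) hNull, add_zero]
    -- the weight vector of R'
    set wt : {p // p ∈ P} → ℝ := fun p => (R' {(p : ℝ × ℝ)}).toReal with hwtdef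
    have hwt0 : ∀ p, 0 ≤ wt p := fun p => ENNReal.toReal_nonneg
    have hMeasEq : Meas P wt = R' := by
      ext S hS
      rw [Meas_apply P wt hS]
      have step1 : ∀ p : {p // p ∈ P},
          (if (p : ℝ × ℝ) ∈ S then ENNReal.ofReal (wt p) else 0) =
          (if (p : ℝ × ℝ) ∈ S then R' {(p : ℝ × ℝ)} else 0) := by
        intro p
        rw [hwtdef, ENNReal.ofReal_toReal (measure_ne_top R' _)]
      rw [Finset.sum_congr rfl fun p _ => step1 p]
      rw [Finset.sum_coe_sort P (fun q => if q ∈ S then R' {q} else 0)]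
      rw [← Finset.sum_filter]
      have hdisj : (↑(P.filter (· ∈ S)) : Set (ℝ × ℝ)).PairwiseDisjoint
          (fun q => ({q} : Set (ℝ × ℝ))) := by
        intro a _ b _ hab
        exact Set.disjoint_singleton.2 hab
      rw [← measure_biUnion_finset hdisj (fun b _ => measurableSet_singleton b)]
      have : (⋃ q ∈ P.filter (· ∈ S), ({q} : Set (ℝ × ℝ))) = S ∩ ↑P := by
        ext z
        simp only [mem_iUnion, Finset.mem_filter, mem_singleton_iff, exists_prop,
          mem_inter_iff, Finset.mem_coe]
        constructor
        · rintro ⟨q, ⟨hqP, hqS⟩, rfl⟩; exact ⟨hqS, hqP⟩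
        · rintro ⟨hzS, hzP⟩; exact ⟨z, ⟨hzP, hzS⟩, rfl⟩
      rw [this, ← hInterP S]
    have hmRwt : ∀ (S : Set (ℝ × ℝ)), MeasurableSet S → mR P wt S = (R' S).toReal := by
      intro S hS
      have := Meas_apply_ofReal P wt hwt0 hS
      rw [hMeasEq] at this
      rw [this, ENNReal.toReal_ofReal (mR_nonneg P wt hwt0 S)]
    have hwtK : wt ∈ K P := by
      refine ⟨hwt0, ?_, ?_⟩
      · have h1 : mR P wt univ = (R' univ).toReal := hmRwt univ MeasurableSet.univ
        have h2 : mR P wt univ = ∑ p, wt p := by unfold mR; simp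
        rw [← h2, h1, measure_univ, ENNReal.toReal_one]
      · intro A1 A2 B1 B2 m1 m2 m3 m4 hA hB
        rw [hmRwt _ (m2.prod m3), hmRwt _ (m1.prod m4), hmRwt _ (m1.prod m3),
          hmRwt _ (m2.prod m4), ← ENNReal.toReal_mul, ← ENNReal.toReal_mul]
        exact ENNReal.toReal_mono
          (ENNReal.mul_ne_top (measure_ne_top R' _) (measure_ne_top R' _))
          (hR'TP2 A1 A2 B1 B2 m1 m2 m3 m4 hA hB)
    -- Rhat agrees on the box and its preimage
    have hRhatInter : ∀ X : Set (ℝ × ℝ), Rhat X = Rhat (X ∩ ↑s) := by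
      intro X
      refine le_antisymm ?_ (measure_mono inter_subset_left)
      refine le_trans (measure_le_inter_add_diff Rhat X ↑s) ?_
      rw [measure_mono_null (diff_subset_compl X ↑s) hs, add_zero]
    calc kuiperDist (Meas P w) Rhat
        ≤ kuiperDist (Meas P wt) Rhat := isMinOn_iff.1 hwmin wt hwtK
      _ = kuiperDist R' Rhat := by rw [hMeasEq]
      _ ≤ kuiperDist Rtilde Rhat := by
          rw [kuiperDist_eq R' Rhat]
          apply Real.sSup_le _ (kuiperDist_nonneg Rtilde Rhat)
          rintro d ⟨a1, a2, b1, b2, hlt1, hlt2, rfl⟩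
          have hbox : R' (Ioc a1 a2 ×ˢ Ioc b1 b2) =
              Rtilde ((f ⁻¹' Ioc a1 a2) ×ˢ (g ⁻¹' Ioc b1 b2)) := by
            rw [hR'def, Measure.map_apply hΦ (measurableSet_Ioc.prod measurableSet_Ioc), hpre]
          have hRhatEq : Rhat (Ioc a1 a2 ×ˢ Ioc b1 b2) =
              Rhat ((f ⁻¹' Ioc a1 a2) ×ˢ (g ⁻¹' Ioc b1 b2)) := by
            rw [hRhatInter (Ioc a1 a2 ×ˢ Ioc b1 b2),
              hRhatInter ((f ⁻¹' Ioc a1 a2) ×ˢ (g ⁻¹' Ioc b1 b2))]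
            congr 1
            ext ⟨x, y⟩
            simp only [mem_inter_iff, Set.mem_prod, mem_preimage, Finset.mem_coe]
            constructor
            · rintro ⟨⟨hx, hy⟩, hmem⟩
              have hxG : x ∈ Gx := Finset.mem_insert_of_mem
                (Finset.mem_image.2 ⟨(x, y), hmem, rfl⟩)
              have hyG : y ∈ Gy := Finset.mem_insert_of_mem
                (Finset.mem_image.2 ⟨(x, y), hmem, rfl⟩)
              rw [hfdef, hgdef]
              rw [rnd_fix Gx hGx hxG, rnd_fix Gy hGy hyG]
              exact ⟨⟨hx, hy⟩, hmem⟩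
            · rintro ⟨⟨hx, hy⟩, hmem⟩
              have hxG : x ∈ Gx := Finset.mem_insert_of_mem
                (Finset.mem_image.2 ⟨(x, y), hmem, rfl⟩)
              have hyG : y ∈ Gy := Finset.mem_insert_of_mem
                (Finset.mem_image.2 ⟨(x, y), hmem, rfl⟩)
              rw [hfdef] at hx
              rw [hgdef] at hy
              rw [rnd_fix Gx hGx hxG] at hx
              rw [rnd_fix Gy hGy hyG] at hy
              exact ⟨⟨hx, hy⟩, hmem⟩
          rw [hbox, hRhatEq]
          exact abs_sub_le_kuiper Rtilde Rhat _ _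
            (fun k => rnd_preimage Gx hGx a1 a2 (k : ℝ))
            (fun k => rnd_preimage Gy hGy b1 b2 (k : ℝ))
end
end
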